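/- arXiv:2602.19179 — 5 statements merged into one kernel-verified Lean document; each statement's English description precedes it below -/
import Mathlib

section
/- If p and q are probability measures with p absolutely continuous with respect to q and the Radon–Nikodym derivative dp/dq lies in the interval [Λ⁻¹, Λ] q-almost everywhere for some Λ ≥ 1, then the total variation distance satisfies TV(p,q) ≤ (Λ − 1)/(Λ + 1). -/
/-!
With `c = (Λ - 1) / (Λ + 1)`, every `h ∈ [Λ⁻¹, Λ]` satisfies `|h - 1| ≤ c (h + 1)`, with equality
at both endpoints. Integrating this against `q` over a set `E`, with `h = dp/dq`, gives
`|p E - q E| ≤ c (p E + q E)`. The total variation of `p - q` is dominated by any measure that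
dominates `|p - q|` setwise, here `c (p + q)`, whose total mass is `2c`.
-/

open MeasureTheory

/-- Total variation distance: TV(p,q) = (1/2) ∫ |dp - dq|. -/
noncomputable def tvDist {α : Type*} [MeasurableSpace α] (p q : Measure α)
    [IsFiniteMeasure p] [IsFiniteMeasure q] : ℝ :=
  ((p.toSignedMeasure - q.toSignedMeasure).totalVariation Set.univ).toReal / 2

theorem abs_sub_one_le_of_mem_Icc_inv {Λ x : ℝ} (hΛ : 0 < Λ) (hx : x ∈ Set.Icc Λ⁻¹ Λ) :
    |x - 1| ≤ (Λ - 1) / (Λ + 1) * (x + 1) := by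
  obtain ⟨hlo, hhi⟩ := hx
  have hxΛ : 1 ≤ x * Λ := by rwa [inv_le_iff_one_le_mul₀ hΛ] at hlo
  have hΛ1 : 0 < Λ + 1 := by linarith
  rw [div_mul_eq_mul_div, abs_le, neg_le, le_div_iff₀ hΛ1, le_div_iff₀ hΛ1]
  constructor <;> nlinarith

namespace MeasureTheory

variable {α : Type*} [MeasurableSpace α]

theorem SignedMeasure.totalVariation_le_of_abs_le {s : SignedMeasure α} {m : Measure α}
    [IsFiniteMeasure m] (h : ∀ E, MeasurableSet E → |s E| ≤ m.real E) : s.totalVariation ≤ m := by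
  rw [totalVariation_eq_variation]
  refine VectorMeasure.variation_le_of_forall_enorm_le fun E hE ↦ ?_
  rw [Real.enorm_eq_ofReal_abs, ← ofReal_measureReal]
  exact ENNReal.ofReal_le_ofReal (h E hE)

theorem Measure.toSignedMeasure_sub_apply_eq_setIntegral {p q : Measure α} [IsFiniteMeasure p]
    [IsFiniteMeasure q] (hac : p ≪ q) {E : Set α} (hE : MeasurableSet E) :
    (p.toSignedMeasure - q.toSignedMeasure) E = ∫ x in E, ((p.rnDeriv q x).toReal - 1) ∂q := by
  rw [toSignedMeasure_sub_apply hE, integral_sub integrable_toReal_rnDeriv.integrableOn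
    (integrable_const 1).integrableOn, setIntegral_toReal_rnDeriv hac, setIntegral_const,
    smul_eq_mul, mul_one]

theorem Measure.abs_toSignedMeasure_sub_apply_le {p q : Measure α} [IsFiniteMeasure p]
    [IsFiniteMeasure q] (hac : p ≪ q) {c : ℝ}
    (hc : ∀ᵐ x ∂q, |(p.rnDeriv q x).toReal - 1| ≤ c * ((p.rnDeriv q x).toReal + 1))
    {E : Set α} (hE : MeasurableSet E) :
    |(p.toSignedMeasure - q.toSignedMeasure) E| ≤ c * (p.real E + q.real E) := by
  have hint : Integrable (fun x ↦ (p.rnDeriv q x).toReal) q := integrable_toReal_rnDeriv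
  calc |(p.toSignedMeasure - q.toSignedMeasure) E|
      = |∫ x in E, ((p.rnDeriv q x).toReal - 1) ∂q| := by
        rw [toSignedMeasure_sub_apply_eq_setIntegral hac hE]
    _ ≤ ∫ x in E, |(p.rnDeriv q x).toReal - 1| ∂q := abs_integral_le_integral_abs
    _ ≤ ∫ x in E, c * ((p.rnDeriv q x).toReal + 1) ∂q :=
        setIntegral_mono_ae_restrict (hint.sub (integrable_const 1)).abs.integrableOn
          ((hint.add (integrable_const 1)).const_mul c).integrableOn (ae_restrict_of_ae hc)
    _ = c * (p.real E + q.real E) := by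
        rw [integral_const_mul, integral_add hint.integrableOn (integrable_const 1).integrableOn,
          setIntegral_toReal_rnDeriv hac, setIntegral_const, smul_eq_mul, mul_one]

end MeasureTheory

theorem tvDist_le_of_abs_le {α : Type*} [MeasurableSpace α] {p q : Measure α} [IsFiniteMeasure p]
    [IsFiniteMeasure q] {c : ℝ} (hc : 0 ≤ c)
    (h : ∀ E, MeasurableSet E →
      |(p.toSignedMeasure - q.toSignedMeasure) E| ≤ c * (p.real E + q.real E)) :
    tvDist p q ≤ c * (p.real Set.univ + q.real Set.univ) / 2 := by
  set m : Measure α := c.toNNReal • (p + q)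
  have hm (E : Set α) : m.real E = c * (p.real E + q.real E) := by
    rw [measureReal_nnreal_smul_apply, measureReal_add_apply, Real.coe_toNNReal c hc]
  have hle := SignedMeasure.totalVariation_le_of_abs_le fun E hE ↦ (h E hE).trans_eq (hm E).symm
  rw [tvDist, ← hm]
  gcongr
  exact ENNReal.toReal_mono (measure_ne_top _ _) (hle _)

theorem stmt0 {α : Type*} [MeasurableSpace α] (p q : Measure α)
    [IsProbabilityMeasure p] [IsProbabilityMeasure q] (Λ : ℝ) (hΛ : 1 ≤ Λ)
    (hac : p ≪ q)
    (hlr : ∀ᵐ x ∂q, (p.rnDeriv q x).toReal ∈ Set.Icc Λ⁻¹ Λ) :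
    tvDist p q ≤ (Λ - 1) / (Λ + 1) := by
  have hΛ0 : 0 < Λ := by linarith
  have hpoint : ∀ᵐ x ∂q, |(p.rnDeriv q x).toReal - 1| ≤
      (Λ - 1) / (Λ + 1) * ((p.rnDeriv q x).toReal + 1) := by
    filter_upwards [hlr] with x hx using abs_sub_one_le_of_mem_Icc_inv hΛ0 hx
  have htv := tvDist_le_of_abs_le (div_nonneg (by linarith) (by linarith))
    fun E hE ↦ Measure.abs_toSignedMeasure_sub_apply_le hac hpoint hE
  simp only [probReal_univ] at htv
  linarith
end

section
/- Let h : [a,b] → ℝ be measurable on a probability space with a ≤ 1 ≤ b, taking values in [a,b] almost surely, and E[h] = 1. Then E[|h − 1|] ≤ 2(1 − a)(b − 1)/(b − a), provided a < b. -/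
open MeasureTheory

theorem stmt1 {Ω : Type*} [MeasurableSpace Ω] (μ : Measure Ω) [IsProbabilityMeasure μ]
    (h : Ω → ℝ) (a b : ℝ) (hab : a < b) (ha1 : a ≤ 1) (h1b : 1 ≤ b)
    (hmeas : Measurable h) (hbdd : ∀ᵐ ω ∂μ, h ω ∈ Set.Icc a b)
    (hint : ∫ ω, h ω ∂μ = 1) :
    ∫ ω, |h ω - 1| ∂μ ≤ 2 * (1 - a) * (b - 1) / (b - a) := by
  have hba : (0:ℝ) < b - a := by linarith
  set t : ℝ := (a + b - 2) / (b - a) with ht_def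
  have ht : t * (b - a) = a + b - 2 := div_mul_cancel₀ _ hba.ne'
  have hint_h : Integrable h μ := by
    apply Integrable.mono' (integrable_const (max |a| |b|)) hmeas.aestronglyMeasurable
    filter_upwards [hbdd] with ω hω
    rw [Real.norm_eq_abs, abs_le]
    constructor
    · have : -|a| ≤ a := neg_abs_le a
      have := le_max_left |a| |b|
      linarith [hω.1]
    · have : b ≤ |b| := le_abs_self b
      have := le_max_right |a| |b|
      linarith [hω.2]
  have key : ∀ x : ℝ, a ≤ x → x ≤ b → |x - 1| ≤ (1 - a) + (x - a) * t := by
    intro x hax hxb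
    rcases le_or_gt x 1 with hx | hx
    · rw [abs_of_nonpos (by linarith)]
      nlinarith [mul_nonneg (sub_nonneg.mpr hax) (sub_nonneg.mpr h1b)]
    · rw [abs_of_pos (by linarith)]
      nlinarith [mul_nonneg (sub_nonneg.mpr ha1) (sub_nonneg.mpr hxb)]
  have hint_g : Integrable (fun ω => (1 - a) + (h ω - a) * t) μ :=
    (integrable_const (1 - a)).add ((hint_h.sub (integrable_const a)).mul_const t)
  have hmono : ∫ ω, |h ω - 1| ∂μ ≤ ∫ ω, ((1 - a) + (h ω - a) * t) ∂μ := by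
    apply integral_mono_ae ((hint_h.sub (integrable_const 1)).abs) hint_g
    filter_upwards [hbdd] with ω hω
    exact key _ hω.1 hω.2
  have i2 : Integrable (fun ω => (h ω - a) * t) μ :=
    (hint_h.sub (integrable_const a)).mul_const t
  have hcalc : ∫ ω, ((1 - a) + (h ω - a) * t) ∂μ = (1 - a) + (1 - a) * t := by
    rw [integral_add (integrable_const _) i2, integral_const, integral_mul_const,
      integral_sub hint_h (integrable_const a), integral_const, hint]
    simp
  rw [hcalc] at hmono
  refine hmono.trans (le_of_eq ?_)
  rw [ht_def]
  field_simp
  ring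
end

section
/- Let P, Q be probability measures on ℝ^n with finite second moments, uncentered second-moment matrices M₂(P) = E[XX^⊤], M₂(Q) = E[YY^⊤], and scalar second moments m₂(P) = E‖X‖², m₂(Q) = E‖Y‖². Then ‖M₂(P) − M₂(Q)‖_F ≤ √(2(m₂(P) + m₂(Q))) · W₂(P,Q). -/
/-!
Couple `P` and `Q` by `π`. The outer product is locally Lipschitz with linear growth,
`‖x xᵀ - y yᵀ‖_F ≤ ‖x - y‖ (‖x‖ + ‖y‖)`, because `x xᵀ - y yᵀ = x (x - y)ᵀ + (x - y) yᵀ` and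
`‖u vᵀ‖_F = ‖u‖ ‖v‖`. Writing `M₂(P) - M₂(Q)` as the `π`-integral of `X Xᵀ - Y Yᵀ` and applying
Cauchy–Schwarz in `L²(π)` together with `(a + b)² ≤ 2 (a² + b²)` bounds it by
`√(2 (m₂ P + m₂ Q))` times the square root of the transport cost of `π`; take the infimum over `π`.
-/

open MeasureTheory

/-- 2-Wasserstein distance (Euclidean cost), as the infimum over couplings with
integrable quadratic cost. -/
noncomputable def W2 {E : Type*} [NormedAddCommGroup E] [MeasurableSpace E]
    (P Q : Measure E) : ℝ :=
  Real.sqrt (sInf {c : ℝ | ∃ π : Measure (E × E),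
    π.map Prod.fst = P ∧ π.map Prod.snd = Q ∧
    Integrable (fun p => ‖p.1 - p.2‖ ^ 2) π ∧
    c = ∫ p, ‖p.1 - p.2‖ ^ 2 ∂π})

theorem integral_mul_le_sqrt_mul_sqrt_of_nonneg {α : Type*} [MeasurableSpace α] {μ : Measure α}
    {f g : α → ℝ} (hf₀ : 0 ≤ᵐ[μ] f) (hg₀ : 0 ≤ᵐ[μ] g) (hf : MemLp f 2 μ) (hg : MemLp g 2 μ) :
    ∫ a, f a * g a ∂μ ≤ √(∫ a, f a ^ 2 ∂μ) * √(∫ a, g a ^ 2 ∂μ) := by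
  have h := integral_mul_le_Lp_mul_Lq_of_nonneg Real.HolderConjugate.two_two hf₀ hg₀
    (by simpa using hf) (by simpa using hg)
  simpa only [Real.rpow_two, Real.sqrt_eq_rpow] using h

theorem integral_sub_integral_eq_integral_of_coupling {α F : Type*} [MeasurableSpace α]
    [NormedAddCommGroup F] [NormedSpace ℝ F] {P Q : Measure α} {π : Measure (α × α)}
    (h₁ : π.map Prod.fst = P) (h₂ : π.map Prod.snd = Q) {f : α → F} (hfP : Integrable f P)
    (hfQ : Integrable f Q) :
    ∫ x, f x ∂P - ∫ y, f y ∂Q = ∫ p, (f p.1 - f p.2) ∂π := by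
  subst h₁ h₂
  rw [integral_map measurable_fst.aemeasurable hfP.aestronglyMeasurable,
    integral_map measurable_snd.aemeasurable hfQ.aestronglyMeasurable]
  exact (integral_sub (hfP.comp_aemeasurable measurable_fst.aemeasurable)
    (hfQ.comp_aemeasurable measurable_snd.aemeasurable)).symm

section Coupling

variable {E : Type*} [NormedAddCommGroup E] [MeasurableSpace E] [BorelSpace E]
  {P Q : Measure E} {π : Measure (E × E)}

theorem memLp_norm_fst_add_norm_snd (h₁ : π.map Prod.fst = P) (h₂ : π.map Prod.snd = Q)
    (hP : Integrable (fun x => ‖x‖ ^ 2) P) (hQ : Integrable (fun y => ‖y‖ ^ 2) Q) :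
    MemLp (fun p : E × E => ‖p.1‖ + ‖p.2‖) 2 π := by
  subst h₁ h₂
  exact ((memLp_two_iff_integrable_sq measurable_fst.norm.aestronglyMeasurable).mpr
    (hP.comp_aemeasurable measurable_fst.aemeasurable)).add
    ((memLp_two_iff_integrable_sq measurable_snd.norm.aestronglyMeasurable).mpr
    (hQ.comp_aemeasurable measurable_snd.aemeasurable))

theorem integral_sq_norm_fst_add_norm_snd_le (h₁ : π.map Prod.fst = P)
    (h₂ : π.map Prod.snd = Q) (hP : Integrable (fun x => ‖x‖ ^ 2) P)
    (hQ : Integrable (fun y => ‖y‖ ^ 2) Q) :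
    ∫ p, (‖p.1‖ + ‖p.2‖) ^ 2 ∂π ≤ 2 * ((∫ x, ‖x‖ ^ 2 ∂P) + ∫ y, ‖y‖ ^ 2 ∂Q) := by
  subst h₁ h₂
  have hm := memLp_norm_fst_add_norm_snd rfl rfl hP hQ
  have hP' : Integrable (fun p : E × E => ‖p.1‖ ^ 2) π :=
    hP.comp_aemeasurable measurable_fst.aemeasurable
  have hQ' : Integrable (fun p : E × E => ‖p.2‖ ^ 2) π :=
    hQ.comp_aemeasurable measurable_snd.aemeasurable
  calc ∫ p, (‖p.1‖ + ‖p.2‖) ^ 2 ∂π ≤ ∫ p, 2 * (‖p.1‖ ^ 2 + ‖p.2‖ ^ 2) ∂π :=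
        integral_mono hm.integrable_sq ((hP'.add hQ').const_mul 2) fun _ => add_sq_le
    _ = _ := by
        rw [integral_const_mul, integral_add hP' hQ',
          integral_map measurable_fst.aemeasurable hP.aestronglyMeasurable,
          integral_map measurable_snd.aemeasurable hQ.aestronglyMeasurable]

variable [SecondCountableTopology E]

theorem memLp_norm_fst_sub_snd (hπ : Integrable (fun p : E × E => ‖p.1 - p.2‖ ^ 2) π) :
    MemLp (fun p : E × E => ‖p.1 - p.2‖) 2 π :=
  (memLp_two_iff_integrable_sq (measurable_fst.sub measurable_snd).norm.aestronglyMeasurable).mpr hπ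

theorem integrable_norm_fst_sub_snd_sq (h₁ : π.map Prod.fst = P) (h₂ : π.map Prod.snd = Q)
    (hP : Integrable (fun x => ‖x‖ ^ 2) P) (hQ : Integrable (fun y => ‖y‖ ^ 2) Q) :
    Integrable (fun p : E × E => ‖p.1 - p.2‖ ^ 2) π := by
  refine (memLp_norm_fst_add_norm_snd h₁ h₂ hP hQ).integrable_sq.mono'
    ((measurable_fst.sub measurable_snd).norm.pow_const 2).aestronglyMeasurable
    (ae_of_all _ fun p => ?_)
  rw [Real.norm_of_nonneg (by positivity)]
  gcongr
  exact norm_sub_le _ _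

theorem integral_norm_sub_mul_add_norm_le (h₁ : π.map Prod.fst = P) (h₂ : π.map Prod.snd = Q)
    (hP : Integrable (fun x => ‖x‖ ^ 2) P) (hQ : Integrable (fun y => ‖y‖ ^ 2) Q)
    (hπ : Integrable (fun p : E × E => ‖p.1 - p.2‖ ^ 2) π) :
    ∫ p, ‖p.1 - p.2‖ * (‖p.1‖ + ‖p.2‖) ∂π ≤
      √(2 * ((∫ x, ‖x‖ ^ 2 ∂P) + ∫ y, ‖y‖ ^ 2 ∂Q)) * √(∫ p, ‖p.1 - p.2‖ ^ 2 ∂π) := by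
  rw [mul_comm √_]
  calc _ ≤ √(∫ p, ‖p.1 - p.2‖ ^ 2 ∂π) * √(∫ p, (‖p.1‖ + ‖p.2‖) ^ 2 ∂π) :=
        integral_mul_le_sqrt_mul_sqrt_of_nonneg (ae_of_all _ fun _ => norm_nonneg _)
          (ae_of_all _ fun _ => by positivity) (memLp_norm_fst_sub_snd hπ)
          (memLp_norm_fst_add_norm_snd h₁ h₂ hP hQ)
    _ ≤ _ := by gcongr; exact integral_sq_norm_fst_add_norm_snd_le h₁ h₂ hP hQ

theorem norm_integral_sub_integral_le_of_coupling {F : Type*} [NormedAddCommGroup F]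
    [NormedSpace ℝ F] {f : E → F} (hf : ∀ x y, ‖f x - f y‖ ≤ ‖x - y‖ * (‖x‖ + ‖y‖))
    (hfP : Integrable f P) (hfQ : Integrable f Q) (h₁ : π.map Prod.fst = P)
    (h₂ : π.map Prod.snd = Q) (hP : Integrable (fun x => ‖x‖ ^ 2) P)
    (hQ : Integrable (fun y => ‖y‖ ^ 2) Q) (hπ : Integrable (fun p : E × E => ‖p.1 - p.2‖ ^ 2) π) :
    ‖∫ x, f x ∂P - ∫ y, f y ∂Q‖ ≤
      √(2 * ((∫ x, ‖x‖ ^ 2 ∂P) + ∫ y, ‖y‖ ^ 2 ∂Q)) * √(∫ p, ‖p.1 - p.2‖ ^ 2 ∂π) := by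
  rw [integral_sub_integral_eq_integral_of_coupling h₁ h₂ hfP hfQ]
  calc ‖∫ p, (f p.1 - f p.2) ∂π‖ ≤ ∫ p, ‖f p.1 - f p.2‖ ∂π := norm_integral_le_integral_norm _
    _ ≤ ∫ p, ‖p.1 - p.2‖ * (‖p.1‖ + ‖p.2‖) ∂π :=
        integral_mono_of_nonneg (ae_of_all _ fun _ => norm_nonneg _)
          ((memLp_norm_fst_sub_snd hπ).integrable_mul (memLp_norm_fst_add_norm_snd h₁ h₂ hP hQ))
          (ae_of_all _ fun p => hf p.1 p.2)
    _ ≤ _ := integral_norm_sub_mul_add_norm_le h₁ h₂ hP hQ hπ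

end Coupling

theorem le_mul_W2_of_forall_coupling {E : Type*} [NormedAddCommGroup E] [MeasurableSpace E]
    {P Q : Measure E} [IsProbabilityMeasure P] [IsProbabilityMeasure Q] {a b : ℝ} (ha : 0 ≤ a)
    (hPQ : Integrable (fun p : E × E => ‖p.1 - p.2‖ ^ 2) (P.prod Q))
    (h : ∀ π : Measure (E × E), π.map Prod.fst = P → π.map Prod.snd = Q →
      Integrable (fun p => ‖p.1 - p.2‖ ^ 2) π → b ≤ a * √(∫ p, ‖p.1 - p.2‖ ^ 2 ∂π)) :
    b ≤ a * W2 P Q := by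
  set S := {c : ℝ | ∃ π : Measure (E × E), π.map Prod.fst = P ∧ π.map Prod.snd = Q ∧
    Integrable (fun p => ‖p.1 - p.2‖ ^ 2) π ∧ c = ∫ p, ‖p.1 - p.2‖ ^ 2 ∂π}
  have hne : S.Nonempty := ⟨_, P.prod Q, by simp, by simp, hPQ, rfl⟩
  have hbdd : BddBelow S := ⟨0, by
    rintro _ ⟨π, -, -, -, rfl⟩
    exact integral_nonneg fun _ => sq_nonneg _⟩
  have hmono : Monotone fun c => a * √c := fun _ _ hc =>
    mul_le_mul_of_nonneg_left (Real.sqrt_le_sqrt hc) ha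
  change b ≤ a * √(sInf S)
  rw [hmono.map_csInf_of_continuousAt (by fun_prop) hne hbdd]
  refine le_csInf (hne.image _) ?_
  rintro _ ⟨_, ⟨π, h₁, h₂, hπ, rfl⟩, rfl⟩
  exact h π h₁ h₂ hπ

section OuterProduct

variable {ι κ : Type*}

/-- The matrix `u vᵀ`, flattened so that its Euclidean norm is the Frobenius norm. -/
noncomputable def outerProduct (u : EuclideanSpace ℝ ι) (v : EuclideanSpace ℝ κ) :
    EuclideanSpace ℝ (ι × κ) :=
  WithLp.toLp 2 fun p => u p.1 * v p.2

@[simp]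
theorem outerProduct_apply (u : EuclideanSpace ℝ ι) (v : EuclideanSpace ℝ κ) (p : ι × κ) :
    outerProduct u v p = u p.1 * v p.2 := rfl

theorem outerProduct_self_sub_outerProduct_self (x y : EuclideanSpace ℝ ι) :
    outerProduct x x - outerProduct y y = outerProduct x (x - y) + outerProduct (x - y) y := by
  ext p
  simp only [PiLp.sub_apply, PiLp.add_apply, outerProduct_apply]
  ring

variable [Fintype ι] [Fintype κ]

theorem EuclideanSpace.norm_eq_sqrt_sum_sum_sq (v : EuclideanSpace ℝ (ι × κ)) :
    ‖v‖ = √(∑ i, ∑ j, v (i, j) ^ 2) := by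
  simp [EuclideanSpace.norm_eq, Fintype.sum_prod_type]

theorem norm_outerProduct (u : EuclideanSpace ℝ ι) (v : EuclideanSpace ℝ κ) :
    ‖outerProduct u v‖ = ‖u‖ * ‖v‖ := by
  rw [EuclideanSpace.norm_eq_sqrt_sum_sum_sq, EuclideanSpace.norm_eq, EuclideanSpace.norm_eq,
    ← Real.sqrt_mul (by positivity), Finset.sum_mul_sum]
  simp [mul_pow]

theorem norm_outerProduct_self_sub_le (x y : EuclideanSpace ℝ ι) :
    ‖outerProduct x x - outerProduct y y‖ ≤ ‖x - y‖ * (‖x‖ + ‖y‖) := by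
  rw [outerProduct_self_sub_outerProduct_self]
  calc _ ≤ ‖outerProduct x (x - y)‖ + ‖outerProduct (x - y) y‖ := norm_add_le _ _
    _ = ‖x - y‖ * (‖x‖ + ‖y‖) := by rw [norm_outerProduct, norm_outerProduct]; ring

theorem integrable_outerProduct_self {μ : Measure (EuclideanSpace ℝ ι)}
    (hμ : Integrable (fun x => ‖x‖ ^ 2) μ) : Integrable (fun x => outerProduct x x) μ := by
  refine hμ.mono' (by unfold outerProduct; fun_prop : Continuous fun x : EuclideanSpace ℝ ι =>
    outerProduct x x).aestronglyMeasurable (ae_of_all _ fun x => ?_)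
  rw [norm_outerProduct, sq]

theorem integral_outerProduct_apply {α : Type*} [MeasurableSpace α] {μ : Measure α}
    {f : α → EuclideanSpace ℝ ι} {g : α → EuclideanSpace ℝ κ}
    (h : Integrable (fun a => outerProduct (f a) (g a)) μ) (p : ι × κ) :
    (∫ a, outerProduct (f a) (g a) ∂μ) p = ∫ a, f a p.1 * g a p.2 ∂μ := by
  simpa using ((EuclideanSpace.proj p).integral_comp_comm h).symm

end OuterProduct

theorem stmt7 {n : ℕ} (P Q : Measure (EuclideanSpace ℝ (Fin n)))
    [IsProbabilityMeasure P] [IsProbabilityMeasure Q]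
    (hP2 : Integrable (fun x => ‖x‖ ^ 2) P) (hQ2 : Integrable (fun x => ‖x‖ ^ 2) Q) :
    Real.sqrt (∑ i, ∑ j, ((∫ x, x i * x j ∂P) - ∫ y, y i * y j ∂Q) ^ 2) ≤
      Real.sqrt (2 * ((∫ x, ‖x‖ ^ 2 ∂P) + ∫ y, ‖y‖ ^ 2 ∂Q)) * W2 P Q := by
  have hP := integrable_outerProduct_self hP2
  have hQ := integrable_outerProduct_self hQ2
  have hLHS : ∀ i j, (∫ x, x i * x j ∂P) - ∫ y, y i * y j ∂Q =
      (∫ x, outerProduct x x ∂P - ∫ y, outerProduct y y ∂Q) (i, j) := fun i j => by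
    rw [PiLp.sub_apply, integral_outerProduct_apply hP, integral_outerProduct_apply hQ]
  simp only [hLHS, ← EuclideanSpace.norm_eq_sqrt_sum_sum_sq]
  exact le_mul_W2_of_forall_coupling (Real.sqrt_nonneg _)
    (integrable_norm_fst_sub_snd_sq (by simp) (by simp) hP2 hQ2) fun π h₁ h₂ hπ =>
      norm_integral_sub_integral_le_of_coupling norm_outerProduct_self_sub_le hP hQ h₁ h₂
        hP2 hQ2 hπ
end

section
/- Let P be a probability measure on ℝ^m with finite second moment, A a measurable set with P(A) = 1 − ε ∈ (0,1], x₀ ∈ A, and R_A := sup_{x∈A} ‖x − x₀‖. Then W₂(P, P(·|A)) ≤ (E[‖X − x₀‖² 1_{A^c}])^{1/2} + R_A √ε, where X ∼ P and P(·|A) is the conditional law of P on A. -/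
/-!
Couple `P` with `P[|A]` by leaving the mass of `P` on `A` in place and sending the mass on `Aᶜ`
to `A` independently, according to `P[|A]`. Only the product part `P|Aᶜ ⊗ P[|A]` carries cost,
and writing `x - y = (x - x₀) - (y - x₀)`, Minkowski's inequality in `L²` of that product bounds
the square root of the cost by `‖x - x₀‖_{L²(P|Aᶜ)} + √(P Aᶜ) ‖y - x₀‖_{L²(P[|A])}`,
where the first term is `(E[‖X - x₀‖² 1_{Aᶜ}])^{1/2}` and the second is at most `R_A √ε`.
-/

open MeasureTheory

open ProbabilityTheory Set

section LpNorm

variable {α β F : Type*} [MeasurableSpace α] [MeasurableSpace β] [NormedAddCommGroup F]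
  {μ : Measure α} {ν : Measure β}

lemma lpNorm_two_eq_sqrt_integral {f : α → F} (hf : AEStronglyMeasurable f μ) :
    lpNorm f 2 μ = √(∫ x, ‖f x‖ ^ 2 ∂μ) := by
  rw [lpNorm_eq_integral_norm_rpow_toReal two_ne_zero ENNReal.ofNat_ne_top hf]
  simp [Real.sqrt_eq_rpow]

lemma lpNorm_le_of_ae_bound [IsProbabilityMeasure μ] {p : ENNReal} {f : α → F} {C : ℝ}
    (hfC : ∀ᵐ x ∂μ, ‖f x‖ ≤ C) : lpNorm f p μ ≤ C := by
  have hC : 0 ≤ C := by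
    obtain ⟨x, hx⟩ := hfC.exists
    exact (norm_nonneg _).trans hx
  by_cases hf : AEStronglyMeasurable f μ
  · rw [← toReal_eLpNorm hf]
    refine ENNReal.toReal_le_of_le_ofReal hC ?_
    simpa using eLpNorm_le_of_ae_bound (p := p) hfC
  · simpa [hf] using hC

variable [IsFiniteMeasure μ] [IsFiniteMeasure ν]

lemma lpNorm_two_comp_fst {f : α → F} (hf : AEStronglyMeasurable f μ) :
    lpNorm (fun z : α × β => f z.1) 2 (μ.prod ν) = √(ν.real univ) * lpNorm f 2 μ := by
  rw [lpNorm_two_eq_sqrt_integral hf.comp_fst, lpNorm_two_eq_sqrt_integral hf,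
    integral_fun_fst (fun x => ‖f x‖ ^ 2), smul_eq_mul, Real.sqrt_mul measureReal_nonneg]

lemma lpNorm_two_comp_snd {f : β → F} (hf : AEStronglyMeasurable f ν) :
    lpNorm (fun z : α × β => f z.2) 2 (μ.prod ν) = √(μ.real univ) * lpNorm f 2 ν := by
  rw [lpNorm_two_eq_sqrt_integral hf.comp_snd, lpNorm_two_eq_sqrt_integral hf,
    integral_fun_snd (fun y => ‖f y‖ ^ 2), smul_eq_mul, Real.sqrt_mul measureReal_nonneg]

end LpNorm

section QuadraticCost

variable {E : Type*} [NormedAddCommGroup E] [MeasurableSpace E]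
  {μ ν : Measure E} [IsFiniteMeasure μ] [IsFiniteMeasure ν]

lemma memLp_fst_sub_snd {p : ENNReal} (x₀ : E) (hμ : MemLp (· - x₀) p μ)
    (hν : MemLp (· - x₀) p ν) : MemLp (fun z : E × E => z.1 - z.2) p (μ.prod ν) := by
  convert (hμ.comp_fst ν).sub (hν.comp_snd μ) using 1
  ext z
  simp

lemma sqrt_integral_norm_fst_sub_snd_sq_le (x₀ : E) (hμ : MemLp (· - x₀) 2 μ)
    (hν : MemLp (· - x₀) 2 ν) :
    √(∫ z, ‖z.1 - z.2‖ ^ 2 ∂μ.prod ν) ≤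
      √(ν.real univ) * lpNorm (· - x₀) 2 μ + √(μ.real univ) * lpNorm (· - x₀) 2 ν := by
  have h₁ := hμ.comp_fst ν
  have h₂ := hν.comp_snd μ
  calc √(∫ z, ‖z.1 - z.2‖ ^ 2 ∂μ.prod ν)
      = lpNorm ((fun z : E × E => z.1 - x₀) - (fun z => z.2 - x₀)) 2 (μ.prod ν) := by
        rw [lpNorm_two_eq_sqrt_integral (h₁.sub h₂).1]
        simp
    _ ≤ lpNorm (fun z : E × E => z.1 - x₀) 2 (μ.prod ν)
        + lpNorm (fun z : E × E => z.2 - x₀) 2 (μ.prod ν) := lpNorm_sub_le h₁ one_le_two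
    _ = _ := by rw [lpNorm_two_comp_fst hμ.1, lpNorm_two_comp_snd hν.1]

lemma W2_le_sqrt_integral {P Q : Measure E} {π : Measure (E × E)}
    (hπ₁ : π.map Prod.fst = P) (hπ₂ : π.map Prod.snd = Q)
    (hπ : Integrable (fun z => ‖z.1 - z.2‖ ^ 2) π) :
    W2 P Q ≤ √(∫ z, ‖z.1 - z.2‖ ^ 2 ∂π) :=
  Real.sqrt_le_sqrt <| csInf_le
    ⟨0, by rintro _ ⟨π', -, -, -, rfl⟩; exact integral_nonneg fun _ => by positivity⟩
    ⟨π, hπ₁, hπ₂, hπ, rfl⟩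

end QuadraticCost

section DiagonalCost

variable {α : Type*} [MeasurableSpace α] {μ : Measure α} {f : α × α → ℝ}

lemma integrable_map_diag (hf : AEStronglyMeasurable f (μ.map Function.diag))
    (hf_diag : ∀ x, f (x, x) = 0) : Integrable f (μ.map Function.diag) := by
  rw [integrable_map_measure hf measurable_diag.aemeasurable]
  simp [Function.comp_def, hf_diag]

lemma integral_map_diag (hf : AEStronglyMeasurable f (μ.map Function.diag))
    (hf_diag : ∀ x, f (x, x) = 0) : ∫ z, f z ∂μ.map Function.diag = 0 := by
  rw [integral_map measurable_diag.aemeasurable hf]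
  simp [hf_diag]

end DiagonalCost

section CondCoupling

variable {α : Type*} [MeasurableSpace α]

noncomputable def condCoupling (P : Measure α) (A : Set α) : Measure (α × α) :=
  (P.restrict A).map Function.diag + (P.restrict Aᶜ).prod P[|A]

variable {P : Measure α} {A : Set α}

lemma restrict_eq_smul_cond [IsFiniteMeasure P] (hPA : P A ≠ 0) :
    P.restrict A = P A • P[|A] := by
  rw [ProbabilityTheory.cond, smul_smul, ENNReal.mul_inv_cancel hPA (measure_ne_top P A), one_smul]

lemma map_fst_condCoupling [IsFiniteMeasure P] (hA : MeasurableSet A) (hPA : P A ≠ 0) :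
    (condCoupling P A).map Prod.fst = P := by
  have := cond_isProbabilityMeasure hPA
  rw [condCoupling, Measure.map_add _ _ measurable_fst,
    Measure.map_map measurable_fst measurable_diag, Measure.map_fst_prod]
  simp [Function.comp_def, Measure.restrict_add_restrict_compl hA]

lemma map_snd_condCoupling [IsProbabilityMeasure P] (hA : MeasurableSet A) (hPA : P A ≠ 0) :
    (condCoupling P A).map Prod.snd = P[|A] := by
  rw [condCoupling, Measure.map_add _ _ measurable_snd,
    Measure.map_map measurable_snd measurable_diag, Measure.map_snd_prod]
  simp [Function.comp_def, restrict_eq_smul_cond hPA, ← add_smul, measure_add_measure_compl hA]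

variable {f : α × α → ℝ}

lemma integrable_condCoupling (hf : AEStronglyMeasurable f (condCoupling P A))
    (hf_diag : ∀ x, f (x, x) = 0) (hf_int : Integrable f ((P.restrict Aᶜ).prod P[|A])) :
    Integrable f (condCoupling P A) :=
  (integrable_map_diag (hf.mono_measure (Measure.le_add_right le_rfl)) hf_diag).add_measure hf_int

lemma integral_condCoupling (hf : AEStronglyMeasurable f (condCoupling P A))
    (hf_diag : ∀ x, f (x, x) = 0) (hf_int : Integrable f ((P.restrict Aᶜ).prod P[|A])) :
    ∫ z, f z ∂condCoupling P A = ∫ z, f z ∂(P.restrict Aᶜ).prod P[|A] := by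
  have hf₀ := hf.mono_measure (Measure.le_add_right le_rfl)
  rw [condCoupling, integral_add_measure (integrable_map_diag hf₀ hf_diag) hf_int,
    integral_map_diag hf₀ hf_diag, zero_add]

end CondCoupling

theorem stmt10_general {m : ℕ} (P : Measure (EuclideanSpace ℝ (Fin m))) [IsProbabilityMeasure P]
    (hP2 : Integrable (fun x => ‖x‖ ^ 2) P)
    (A : Set (EuclideanSpace ℝ (Fin m))) (hA : MeasurableSet A)
    (ε : ℝ) (hε1 : ε < 1) (hPA : P A = ENNReal.ofReal (1 - ε))
    (x₀ : EuclideanSpace ℝ (Fin m))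
    (RA : ℝ) (hRA : ∀ x ∈ A, ‖x - x₀‖ ≤ RA) :
    W2 P (ProbabilityTheory.cond P A) ≤
      Real.sqrt (∫ x in Aᶜ, ‖x - x₀‖ ^ 2 ∂P) + RA * Real.sqrt ε := by
  have hPA0 : P A ≠ 0 := by simpa [hPA] using hε1
  have := cond_isProbabilityMeasure hPA0
  have hcompl : (P.restrict Aᶜ).real univ = ε := by
    rw [measureReal_restrict_apply_univ, probReal_compl_eq_one_sub hA, measureReal_def, hPA,
      ENNReal.toReal_ofReal (by linarith)]
    ring
  have hP : MemLp (· - x₀) 2 P :=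
    ((memLp_two_iff_integrable_sq_norm aestronglyMeasurable_id).2 hP2).sub (memLp_const x₀)
  have hbound : ∀ᵐ y ∂P[|A], ‖y - x₀‖ ≤ RA := ae_cond_of_forall_mem hA hRA
  have hQ : MemLp (· - x₀) 2 P[|A] := .of_bound (by fun_prop) RA hbound
  have hcost : AEStronglyMeasurable (fun z : EuclideanSpace ℝ (Fin m) × _ => ‖z.1 - z.2‖ ^ 2)
      (condCoupling P A) := by fun_prop
  have hcost_int : Integrable (fun z : EuclideanSpace ℝ (Fin m) × _ => ‖z.1 - z.2‖ ^ 2)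
      ((P.restrict Aᶜ).prod P[|A]) :=
    (memLp_two_iff_integrable_sq_norm (by fun_prop)).1 (memLp_fst_sub_snd x₀ (hP.restrict Aᶜ) hQ)
  calc W2 P P[|A] ≤ √(∫ z, ‖z.1 - z.2‖ ^ 2 ∂condCoupling P A) :=
        W2_le_sqrt_integral (map_fst_condCoupling hA hPA0) (map_snd_condCoupling hA hPA0)
          (integrable_condCoupling hcost (by simp) hcost_int)
    _ = √(∫ z, ‖z.1 - z.2‖ ^ 2 ∂(P.restrict Aᶜ).prod P[|A]) := by
        rw [integral_condCoupling hcost (by simp) hcost_int]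
    _ ≤ lpNorm (· - x₀) 2 (P.restrict Aᶜ) + √ε * lpNorm (· - x₀) 2 P[|A] := by
        simpa [hcompl] using sqrt_integral_norm_fst_sub_snd_sq_le x₀ (hP.restrict Aᶜ) hQ
    _ ≤ √(∫ x in Aᶜ, ‖x - x₀‖ ^ 2 ∂P) + RA * √ε := by
        rw [lpNorm_two_eq_sqrt_integral (by fun_prop), mul_comm RA]
        gcongr
        exact lpNorm_le_of_ae_bound hbound

theorem stmt10 {m : ℕ} (P : Measure (EuclideanSpace ℝ (Fin m))) [IsProbabilityMeasure P]
    (hP2 : Integrable (fun x => ‖x‖ ^ 2) P)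
    (A : Set (EuclideanSpace ℝ (Fin m))) (hA : MeasurableSet A)
    (ε : ℝ) (hε0 : 0 ≤ ε) (hε1 : ε < 1) (hPA : P A = ENNReal.ofReal (1 - ε))
    (x₀ : EuclideanSpace ℝ (Fin m)) (hx₀ : x₀ ∈ A)
    (RA : ℝ) (hRA : ∀ x ∈ A, ‖x - x₀‖ ≤ RA) :
    W2 P (ProbabilityTheory.cond P A) ≤
      Real.sqrt (∫ x in Aᶜ, ‖x - x₀‖ ^ 2 ∂P) + RA * Real.sqrt ε :=
  stmt10_general P hP2 A hA ε hε1 hPA x₀ RA hRA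
end

section
/- Let p̃, q̃ be positive measurable functions on a set B with |log p̃(v) − log q̃(v)| ≤ η for all v ∈ B and some η ≥ 0, and assume both are integrable on B with positive integrals. Define normalized densities p_r = p̃/∫_B p̃ and q_r = q̃/∫_B q̃. Then e^{−2η} ≤ p_r(v)/q_r(v) ≤ e^{2η} for all v ∈ B, and consequently TV(p_r, q_r) ≤ (e^{2η} − 1)/(e^{2η} + 1) = tanh(η). -/
open MeasureTheory

theorem stmt14 {α : Type*} [MeasurableSpace α] (μ : Measure α)
    (p q : α → ℝ) (η : ℝ) (hη : 0 ≤ η)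
    (hp : ∀ v, 0 < p v) (hq : ∀ v, 0 < q v)
    (hmp : Measurable p) (hmq : Measurable q)
    (hip : Integrable p μ) (hiq : Integrable q μ)
    (hPp : 0 < ∫ v, p v ∂μ) (hPq : 0 < ∫ v, q v ∂μ)
    (hlog : ∀ v, |Real.log (p v) - Real.log (q v)| ≤ η) :
    (∀ v, (p v / ∫ w, p w ∂μ) / (q v / ∫ w, q w ∂μ) ∈
        Set.Icc (Real.exp (-(2 * η))) (Real.exp (2 * η))) ∧
      (1/2) * ∫ v, |p v / (∫ w, p w ∂μ) - q v / (∫ w, q w ∂μ)| ∂μ ≤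
        (Real.exp (2 * η) - 1) / (Real.exp (2 * η) + 1) ∧
      (Real.exp (2 * η) - 1) / (Real.exp (2 * η) + 1) = Real.tanh η := by
  set P := ∫ v, p v ∂μ with hP
  set Q := ∫ v, q v ∂μ with hQ
  -- pointwise ratio bounds
  have hratio : ∀ v, Real.exp (-η) ≤ p v / q v ∧ p v / q v ≤ Real.exp η := by
    intro v
    have hlv := abs_le.mp (hlog v)
    have h1 : p v / q v = Real.exp (Real.log (p v) - Real.log (q v)) := by
      rw [Real.exp_sub, Real.exp_log (hp v), Real.exp_log (hq v)]
    constructor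
    · rw [h1]; exact Real.exp_le_exp.mpr hlv.1
    · rw [h1]; exact Real.exp_le_exp.mpr hlv.2
  have hmul : Real.exp η * Real.exp (-η) = 1 := by rw [← Real.exp_add]; simp
  have hpq : ∀ v, p v ≤ Real.exp η * q v := by
    intro v
    have := (hratio v).2
    rwa [div_le_iff₀ (hq v)] at this
  have hqp : ∀ v, q v ≤ Real.exp η * p v := by
    intro v
    have h := (hratio v).1
    rw [le_div_iff₀ (hq v)] at h
    calc q v = (Real.exp η * Real.exp (-η)) * q v := by rw [hmul, one_mul]
      _ = Real.exp η * (Real.exp (-η) * q v) := by ring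
      _ ≤ Real.exp η * p v := mul_le_mul_of_nonneg_left h (Real.exp_pos η).le
  have hPQ : P ≤ Real.exp η * Q := by
    calc P ≤ ∫ v, Real.exp η * q v ∂μ :=
          integral_mono hip (hiq.const_mul _) hpq
      _ = Real.exp η * Q := integral_const_mul _ _
  have hQP : Q ≤ Real.exp η * P := by
    calc Q ≤ ∫ v, Real.exp η * p v ∂μ :=
          integral_mono hiq (hip.const_mul _) hqp
      _ = Real.exp η * P := integral_const_mul _ _
  have hexpη := Real.exp_pos η
  have hexpnη := Real.exp_pos (-η)
  have hmem : ∀ v, (p v / P) / (q v / Q) ∈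
      Set.Icc (Real.exp (-(2 * η))) (Real.exp (2 * η)) := by
    intro v
    have heq : (p v / P) / (q v / Q) = (p v / q v) * (Q / P) := by
      field_simp
    have hQPr : Q / P ≤ Real.exp η := by
      rw [div_le_iff₀ hPp]; linarith [hQP]
    have hPQr : Real.exp (-η) ≤ Q / P := by
      rw [le_div_iff₀ hPp, Real.exp_neg, inv_mul_le_iff₀ hexpη] at *
      · linarith [hPQ]
    have hr := hratio v
    have hab : 0 < p v / q v := div_pos (hp v) (hq v)
    constructor
    · rw [heq]
      have : Real.exp (-(2*η)) = Real.exp (-η) * Real.exp (-η) := by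
        rw [← Real.exp_add]; ring_nf
      rw [this]
      exact mul_le_mul hr.1 hPQr hexpnη.le hab.le
    · rw [heq]
      have : Real.exp (2*η) = Real.exp η * Real.exp η := by
        rw [← Real.exp_add]; ring_nf
      rw [this]
      have hQP0 : 0 ≤ Q / P := le_of_lt (div_pos hPq hPp)
      exact mul_le_mul hr.2 hQPr hQP0 (le_of_lt hexpη)
  refine ⟨hmem, ?_, ?_⟩
  · -- TV bound
    set Λ := Real.exp (2 * η) with hΛ
    have hΛ1 : 1 ≤ Λ := Real.one_le_exp (by linarith)
    have hΛpos : (0:ℝ) < Λ + 1 := by linarith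
    set c := (Λ - 1) / (Λ + 1) with hc
    have hptw : ∀ v, |p v / P - q v / Q| ≤ c * (p v / P + q v / Q) := by
      intro v
      obtain ⟨hlo, hhi⟩ := hmem v
      set a := p v / P
      set b := q v / Q
      have ha : 0 < a := div_pos (hp v) hPp
      have hb : 0 < b := div_pos (hq v) hPq
      have haΛb : a ≤ Λ * b := by
        rw [div_le_iff₀ hb] at hhi; linarith [hhi]
      have hbΛa : b ≤ Λ * a := by
        have hinv : Real.exp (-(2*η)) = Λ⁻¹ := by rw [hΛ, ← Real.exp_neg]
        rw [hinv, le_div_iff₀ hb, inv_mul_le_iff₀ (by positivity : (0:ℝ) < Λ)] at hlo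
        linarith
      have h5 : a - b ≤ c * (a + b) := by
        rw [hc, div_mul_eq_mul_div, le_div_iff₀ hΛpos]; nlinarith
      have h6 : b - a ≤ c * (a + b) := by
        rw [hc, div_mul_eq_mul_div, le_div_iff₀ hΛpos]; nlinarith
      exact abs_sub_le_iff.mpr ⟨h5, h6⟩
    have hiPr : Integrable (fun v => p v / P) μ := hip.div_const P
    have hiQr : Integrable (fun v => q v / Q) μ := hiq.div_const Q
    have hIabs : Integrable (fun v => |p v / P - q v / Q|) μ := (hiPr.sub hiQr).abs
    have hIrhs : Integrable (fun v => c * (p v / P + q v / Q)) μ :=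
      (hiPr.add hiQr).const_mul c
    have hint : ∫ v, |p v / P - q v / Q| ∂μ ≤ ∫ v, c * (p v / P + q v / Q) ∂μ :=
      integral_mono hIabs hIrhs hptw
    have h1 : ∫ v, p v / P ∂μ = 1 := by
      rw [integral_div]; exact div_self (ne_of_gt hPp)
    have h2 : ∫ v, q v / Q ∂μ = 1 := by
      rw [integral_div]; exact div_self (ne_of_gt hPq)
    have hrhs : ∫ v, c * (p v / P + q v / Q) ∂μ = 2 * c := by
      rw [integral_const_mul, integral_add hiPr hiQr, h1, h2]; ring
    rw [hrhs] at hint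
    linarith
  · -- tanh identity
    rw [Real.tanh_eq_sinh_div_cosh, Real.sinh_eq, Real.cosh_eq, two_mul,
      Real.exp_add]
    have h1 : Real.exp η ≠ 0 := ne_of_gt (Real.exp_pos η)
    have h2 : (0:ℝ) < Real.exp (-η) := Real.exp_pos (-η)
    have h3 : Real.exp η * Real.exp η + 1 ≠ 0 := by positivity
    have h4 : Real.exp η + Real.exp (-η) ≠ 0 := by positivity
    rw [Real.exp_neg] at *
    field_simp
end
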